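/- arXiv:2602.03736 — 8 statements merged into one kernel-verified Lean document; each statement's English description precedes it below -/
import Mathlib

section
/- Every piecewise syndetic subset of a semigroup can be written as the intersection of a thick set and a syndetic set. -/
/-- `A` is thick: every finite nonempty set can be right-translated into `A`. -/
def Thick {S : Type*} [Semigroup S] (A : Set S) : Prop :=
  ∀ E : Finset S, E.Nonempty → ∃ x : S, ∀ e ∈ E, e * x ∈ A

def Syndetic {S : Type*} [Semigroup S] (A : Set S) : Prop :=
  ∃ F : Finset S, F.Nonempty ∧ ∀ s : S, ∃ t ∈ F, t * s ∈ A

def PiecewiseSyndetic {S : Type*} [Semigroup S] (A : Set S) : Prop :=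
  ∃ F : Finset S, F.Nonempty ∧ Thick {s : S | ∃ t ∈ F, t * s ∈ A}

def ThickAdd {S : Type*} [AddSemigroup S] (A : Set S) : Prop :=
  ∀ E : Finset S, E.Nonempty → ∃ x : S, ∀ e ∈ E, e + x ∈ A

def SyndeticAdd {S : Type*} [AddSemigroup S] (A : Set S) : Prop :=
  ∃ F : Finset S, F.Nonempty ∧ ∀ s : S, ∃ t ∈ F, t + s ∈ A

def PiecewiseSyndeticAdd {S : Type*} [AddSemigroup S] (A : Set S) : Prop :=
  ∃ F : Finset S, F.Nonempty ∧ ThickAdd {s : S | ∃ t ∈ F, t + s ∈ A}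

/-- Sum of `f t` over a nonempty finite `H ⊆ ℕ` in a commutative semigroup
(junk value `f 0` when `H = ∅`). -/
def fSum {S : Type*} [AddCommSemigroup S] (H : Finset ℕ) (f : ℕ → S) : S :=
  match Finset.sort H (· ≤ ·) with
  | [] => f 0
  | a :: l => l.foldl (fun s t => s + f t) (f a)

/-- `J`-set in a commutative semigroup. -/
def JSetAdd {S : Type*} [AddCommSemigroup S] (A : Set S) : Prop :=
  ∀ F : Finset (ℕ → S), F.Nonempty →
    ∃ (a : S) (H : Finset ℕ), H.Nonempty ∧ ∀ f ∈ F, a + fSum H f ∈ A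

/-- `x(m,a,t,f) = a(0)·f(t 0)·a(1)·f(t 1)⋯f(t (m-1))·a(m)` (0-indexed version of
`(∏_{j=1}^m a(j)·f(t(j)))·a(m+1)`). -/
def xNC {S : Type*} [Semigroup S] (m : ℕ) (a : ℕ → S) (t : ℕ → ℕ) (f : ℕ → S) : S :=
  (List.range m).foldl (fun s j => s * f (t j) * a (j + 1)) (a 0)

/-- `J`-set in a not-necessarily-commutative semigroup. -/
def JSetNC {S : Type*} [Semigroup S] (A : Set S) : Prop :=
  ∀ G : Finset (ℕ → S), G.Nonempty →
    ∃ (m : ℕ) (a : ℕ → S) (t : ℕ → ℕ), 1 ≤ m ∧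
      (∀ i j : ℕ, i < j → j < m → t i < t j) ∧
      ∀ f ∈ G, xNC m a t f ∈ A

/-- `v 0 + v 1 + ⋯ + v r` in an additive semigroup. -/
def seqSum {S : Type*} [AddSemigroup S] (v : ℕ → S) (r : ℕ) : S :=
  (List.range r).foldl (fun s j => s + v (j + 1)) (v 0)

/-- `v 0 * v 1 * ⋯ * v r` in a semigroup. -/
def seqProd {S : Type*} [Semigroup S] (v : ℕ → S) (r : ℕ) : S :=
  (List.range r).foldl (fun s j => s * v (j + 1)) (v 0)

/-- Collectionwise piecewise syndetic family (multiplicative). -/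
def CollectionwisePS {S : Type*} [Semigroup S] (𝒜 : Set (Set S)) : Prop :=
  ∃ (G : Finset (Set S) → Finset S) (x : Finset (Set S) → Finset S → S),
    ∀ (F : Finset S) (ℱ ℋ : Finset (Set S)), ℱ.Nonempty → ↑ℋ ⊆ 𝒜 → ℱ ⊆ ℋ →
      ∀ y ∈ F, ∃ t ∈ G ℱ, t * (y * x ℋ F) ∈ ⋂₀ (ℱ : Set (Set S))

/-- Collectionwise piecewise syndetic family (additive). -/
def CollectionwisePSAdd {S : Type*} [AddSemigroup S] (𝒜 : Set (Set S)) : Prop :=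
  ∃ (G : Finset (Set S) → Finset S) (x : Finset (Set S) → Finset S → S),
    ∀ (F : Finset S) (ℱ ℋ : Finset (Set S)), ℱ.Nonempty → ↑ℋ ⊆ 𝒜 → ℱ ⊆ ℋ →
      ∀ y ∈ F, ∃ t ∈ G ℱ, t + (y + x ℋ F) ∈ ⋂₀ (ℱ : Set (Set S))

/-- Central set (multiplicative), via the combinatorial characterization. -/
def Central {S : Type*} [Semigroup S] (A : Set S) : Prop :=
  ∃ (I : Type) (C : I → Set S), Nonempty I ∧
    (∀ N, C N ⊆ A) ∧
    (∀ N M : I, ∃ P : I, C P ⊆ C N ∧ C P ⊆ C M) ∧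
    (∀ N : I, ∀ y ∈ C N, ∃ M : I, C M ⊆ {s : S | y * s ∈ C N}) ∧
    CollectionwisePS {B : Set S | ∃ N : I, B = C N}

/-- Central set (additive), via the combinatorial characterization. -/
def CentralAdd {S : Type*} [AddSemigroup S] (A : Set S) : Prop :=
  ∃ (I : Type) (C : I → Set S), Nonempty I ∧
    (∀ N, C N ⊆ A) ∧
    (∀ N M : I, ∃ P : I, C P ⊆ C N ∧ C P ⊆ C M) ∧
    (∀ N : I, ∀ y ∈ C N, ∃ M : I, C M ⊆ {s : S | y + s ∈ C N}) ∧
    CollectionwisePSAdd {B : Set S | ∃ N : I, B = C N}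

/-- The union `⋃_{t ∈ F} t⁻¹A` of the left-translation preimages of `A`. -/
def preimageUnion {S : Type*} [Semigroup S] (F : Finset S) (A : Set S) : Set S :=
  {s | ∃ t ∈ F, t * s ∈ A}

theorem Thick.mono {S : Type*} [Semigroup S] {A B : Set S} (hA : Thick A) (hAB : A ⊆ B) :
    Thick B := fun E hE => by
  obtain ⟨x, hx⟩ := hA E hE
  exact ⟨x, fun e he => hAB (hx e he)⟩

open Pointwise in
/-- If `t₀ ∈ F` and `t₀ s ∈ ⋃_{t ∈ F} t⁻¹A`, then `t t₀ s ∈ A` for some `t ∈ F`, so `F ∪ F F`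
witnesses syndeticity. -/
theorem syndetic_union_compl_preimageUnion {S : Type*} [Semigroup S] {F : Finset S}
    (hF : F.Nonempty) (A : Set S) : Syndetic (A ∪ (preimageUnion F A)ᶜ) := by
  classical
  obtain ⟨t₀, ht₀⟩ := hF
  refine ⟨F ∪ F * F, ⟨t₀, Finset.mem_union_left _ ht₀⟩, fun s => ?_⟩
  by_cases hs : t₀ * s ∈ preimageUnion F A
  · obtain ⟨t, ht, htA⟩ := hs
    refine ⟨t * t₀, Finset.mem_union_right _ (Finset.mul_mem_mul ht ht₀), Or.inl ?_⟩
    rwa [mul_assoc]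
  · exact ⟨t₀, Finset.mem_union_left _ ht₀, Or.inr hs⟩

/-- every piecewise syndetic set is the intersection of a thick set
and a syndetic set. -/
theorem piecewiseSyndetic_eq_thick_inter_syndetic {S : Type*} [Semigroup S]
    (A : Set S) (hA : PiecewiseSyndetic A) :
    ∃ T B : Set S, Thick T ∧ Syndetic B ∧ A = T ∩ B := by
  obtain ⟨F, hF, hthick⟩ := hA
  set G := preimageUnion F A
  refine ⟨A ∪ G, A ∪ Gᶜ, hthick.mono Set.subset_union_right,
    syndetic_union_compl_preimageUnion hF A, ?_⟩
  rw [← Set.union_inter_distrib_left, Set.inter_compl_self, Set.union_empty]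
end

section
/- Let (S,+) be a commutative semigroup and let A ⊆ S be a J-set. Then for every m ∈ ℕ and every finite nonempty set F of sequences f : ℕ → S, there exist a ∈ S and a finite nonempty H ⊆ ℕ with min H > m such that a + Σ_{t∈H} f(t) ∈ A for all f ∈ F. -/
lemma fSum_map_of_strictMono {S : Type*} [AddCommSemigroup S] {H : Finset ℕ}
    (hH : H.Nonempty) {e : ℕ ↪ ℕ} (he : StrictMono e) (f : ℕ → S) :
    fSum (H.map e) f = fSum H (f ∘ e) := by
  unfold fSum
  rw [← (he.strictMonoOn H).map_finsetSort]
  have hsort : H.sort (· ≤ ·) ≠ [] := by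
    rw [Ne, ← List.length_eq_zero_iff, Finset.length_sort]
    exact hH.card_pos.ne'
  obtain ⟨a, l, hs⟩ := List.exists_cons_of_ne_nil hsort
  simp [hs, List.foldl_map]

/-- for a `J`-set in a commutative semigroup, the witnessing set `H`
can be chosen with `min H > m`. -/
theorem jSetAdd_min_gt {S : Type*} [AddCommSemigroup S] (A : Set S)
    (hA : JSetAdd A) (m : ℕ) (F : Finset (ℕ → S)) (hF : F.Nonempty) :
    ∃ (a : S) (H : Finset ℕ), H.Nonempty ∧ (∀ t ∈ H, m < t) ∧
      ∀ f ∈ F, a + fSum H f ∈ A := by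
  classical
  set shift := addRightEmbedding (m + 1)
  obtain ⟨a, H, hH, hshifted⟩ := hA (F.image (· ∘ shift)) (hF.image _)
  refine ⟨a, H.map shift, hH.map, ?_, fun f hf => ?_⟩
  · simp only [shift, Finset.mem_map, addRightEmbedding_apply]
    rintro _ ⟨t, -, rfl⟩
    omega
  · rw [fSum_map_of_strictMono hH add_left_strictMono]
    exact hshifted _ (Finset.mem_image_of_mem _ hf)
end

section
/- Let (S,+) be a commutative semigroup. Every piecewise syndetic subset A ⊆ S is a J-set: for every finite nonempty set F of sequences f : ℕ → S there exist a ∈ S and a finite nonempty H ⊆ ℕ such that a + Σ_{t∈H} f(t) ∈ A for all f ∈ F. -/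
/-!
Index a Hales–Jewett cube `ι → 𝔉` by positions `pos : ι ↪ ℕ` and send a word `w` to
`Σᵢ wᵢ (pos i)`. Along a combinatorial line with free coordinates `I` the image of the word
`f, f, …` is `a + Σ_{t ∈ pos I} f t`, where `a` collects the fixed coordinates; so a monochromatic
line is a J-pattern for `𝔉`. Thickness translates the finitely many word sums by some `x` into
`⋃_{t ∈ T} (−t + A)` (`T` witnessing piecewise syndeticity), which colours them by `t`, and the
J-pattern found in the class of `t` translates back into `A`.
-/

open Finset Combinatorics

theorem Finset.fold_filter_fold_filter_not {α β : Type*} (op : β → β → β) [Std.Commutative op]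
    [Std.Associative op] (s : Finset α) (p : α → Prop) [DecidablePred p] (b : β) (f : α → β) :
    (s.filter p).fold op ((s.filter (¬ p ·)).fold op b f) f = s.fold op b f := by
  simp only [fold, filter_val, Multiset.fold_eq_foldr, ← Multiset.foldr_add, ← Multiset.map_add,
    Multiset.filter_add_not]

theorem add_fSum_eq_fold {S : Type*} [AddCommSemigroup S] (a : S) {H : Finset ℕ}
    (hH : H.Nonempty) (f : ℕ → S) : a + fSum H f = H.fold ((· + ·) : S → S → S) a f := by
  rw [fold, ← sort_eq H (· ≤ ·), Multiset.map_coe, Multiset.coe_fold_l, fSum]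
  cases h : sort H (· ≤ ·) with
  | nil => rw [← card_pos, ← length_sort (· ≤ ·), h] at hH; simp at hH
  | cons t l =>
    dsimp only
    rw [← List.foldl_map, ← List.foldl_assoc (op := ((· + ·) : S → S → S)), List.map_cons,
      List.foldl_cons]

theorem Combinatorics.Line.fold_apply {α ι β : Type*} [Fintype ι] (op : β → β → β)
    [Std.Commutative op] [Std.Associative op] (l : Line α ι) (b : β) (φ : ι → α → β) (x y : α) :
    univ.fold op b (fun i => φ i (l x i)) =
      (univ.filter (l.idxFun · = none)).fold op
        ((univ.filter (l.idxFun · ≠ none)).fold op b (fun i => φ i (l y i))) (fun i => φ i x) := by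
  rw [← fold_filter_fold_filter_not op univ (l.idxFun · = none)]
  refine (fold_congr fun i hi => ?_).trans
    (congrArg (fun c => fold op c _ _) (fold_congr fun i hi => ?_))
  · rw [l.apply_none _ _ (mem_filter.mp hi).2]
  · obtain ⟨a, ha⟩ := Option.ne_none_iff_exists'.mp (mem_filter.mp hi).2
    rw [l.apply_some ha, l.apply_some ha]

section JPattern

variable {S : Type*} [AddCommSemigroup S]

def HasJPattern (𝔉 : Finset (ℕ → S)) (A : Set S) : Prop :=
  ∃ (a : S) (H : Finset ℕ), H.Nonempty ∧ ∀ f ∈ 𝔉, a + fSum H f ∈ A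

theorem HasJPattern.of_add_left {𝔉 : Finset (ℕ → S)} {A : Set S} {c : S}
    (h : HasJPattern 𝔉 {s | c + s ∈ A}) : HasJPattern 𝔉 A := by
  obtain ⟨a, H, hH, hA⟩ := h
  exact ⟨c + a, H, hH, fun f hf => add_assoc c a (fSum H f) ▸ hA f hf⟩

theorem exists_finset_forall_cover_hasJPattern {𝔉 : Finset (ℕ → S)} (h𝔉 : 𝔉.Nonempty)
    (κ : Type*) [Finite κ] :
    ∃ E : Finset S, E.Nonempty ∧
      ∀ P : κ → Set S, (↑E ⊆ ⋃ k, P k) → ∃ k, HasJPattern 𝔉 (P k) := by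
  classical
  obtain ⟨f₀, hf₀⟩ := h𝔉
  have : Nonempty 𝔉 := ⟨⟨f₀, hf₀⟩⟩
  obtain ⟨ι, _, hHJ⟩ := Line.exists_mono_in_high_dimension 𝔉 κ
  let pos : ι ↪ ℕ := (Fintype.equivFin ι).toEmbedding.trans Fin.valEmbedding
  -- The seed `f₀ 0` makes the fixed part of a line an element of `S` even when the line has no
  -- fixed coordinates.
  let σ : (ι → 𝔉) → S := fun w => univ.fold (· + ·) (f₀ 0) fun i => (w i : ℕ → S) (pos i)
  refine ⟨univ.image σ, univ_nonempty.image σ, fun P hP => ?_⟩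
  have hcover (w : ι → 𝔉) : ∃ k, σ w ∈ P k :=
    Set.mem_iUnion.mp (hP (mem_coe.mpr (mem_image_of_mem σ (mem_univ w))))
  choose C hC using hcover
  obtain ⟨l, k, hl⟩ := hHJ C
  set H := (univ.filter (l.idxFun · = none)).map pos
  have hH : H.Nonempty := by
    obtain ⟨i₀, hi₀⟩ := l.proper
    exact ⟨pos i₀, mem_map_of_mem _ (by simpa using hi₀)⟩
  refine ⟨k, (univ.filter (l.idxFun · ≠ none)).fold (· + ·) (f₀ 0)
      (fun i => ((l ⟨f₀, hf₀⟩ i : 𝔉) : ℕ → S) (pos i)), H, hH, fun f hf => ?_⟩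
  rw [← hl ⟨f, hf⟩, add_fSum_eq_fold _ hH, fold_map]
  convert hC (l ⟨f, hf⟩) using 1
  exact (Line.fold_apply ((· + ·) : S → S → S) l _ (fun i g => (g : ℕ → S) (pos i))
    ⟨f, hf⟩ ⟨f₀, hf₀⟩).symm

end JPattern

/-- in a commutative semigroup, every piecewise syndetic set is a
`J`-set. -/
theorem piecewiseSyndeticAdd_jSet {S : Type*} [AddCommSemigroup S] (A : Set S)
    (hA : PiecewiseSyndeticAdd A) :
    ∀ F : Finset (ℕ → S), F.Nonempty →
      ∃ (a : S) (H : Finset ℕ), H.Nonempty ∧ ∀ f ∈ F, a + fSum H f ∈ A := by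
  obtain ⟨T, -, hthick⟩ := hA
  intro 𝔉 h𝔉
  obtain ⟨E, hE, hpattern⟩ := exists_finset_forall_cover_hasJPattern (S := S) h𝔉 T
  obtain ⟨x, hx⟩ := hthick E hE
  have hcover : ↑E ⊆ ⋃ t : T, {s | (t + x : S) + s ∈ A} := fun e he => by
    obtain ⟨t, ht, htA⟩ := hx e he
    exact Set.mem_iUnion.mpr ⟨⟨t, ht⟩, show t + x + e ∈ A by rwa [add_right_comm, add_assoc]⟩
  obtain ⟨t, ht⟩ := hpattern _ hcover
  exact ht.of_add_left
end

section
/- Let (S,·) be a (not necessarily commutative) semigroup. Every piecewise syndetic subset A ⊆ S is a J-set: for every finite nonempty set G of sequences f : ℕ → S there exist m ∈ ℕ, a ∈ S^{m+1}, and t(1) < t(2) < ⋯ < t(m) in ℕ such that a(1)·f(t(1))·a(2)·f(t(2))⋯a(m)·f(t(m))·a(m+1) ∈ A for all f ∈ G. -/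
/-!
Let `F` witness that `B = ⋃_{y ∈ F} y⁻¹A` is thick and let `e = g₀ 0` for some `g₀ ∈ G`.
Hales–Jewett gives a length `N` such that every `F`-colouring of the words `w : Fin N → G`
has a monochromatic combinatorial line. A single `x` translates all the products
`P(w) = e · (e · w₀(0)) ⋯ (e · w_{N-1}(N-1))` into `B`; colour `w` by some `y ∈ F` with
`y · P(w) · x ∈ A`. Along a monochromatic line `l`, with colour `y`, the element `y · P(l f) · x`
is `x(m, a, t, f)`, where `t` enumerates the active coordinates of `l` and the `a i` are the
products of the fixed letters between them.
-/

def interleavedProd {S : Type*} [Semigroup S] (c e : S) (w : ℕ → S) (N : ℕ) : S :=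
  (List.range N).foldl (fun s j => s * (e * w j)) c

section Semigroup

variable {S : Type*} [Semigroup S]

theorem interleavedProd_succ (c e : S) (w : ℕ → S) (N : ℕ) :
    interleavedProd c e w (N + 1) = interleavedProd c e w N * (e * w N) := by
  simp only [interleavedProd, List.range_succ, List.foldl_append, List.foldl_cons,
    List.foldl_nil]

theorem interleavedProd_congr (c e : S) {w w' : ℕ → S} {N : ℕ} (h : ∀ j < N, w j = w' j) :
    interleavedProd c e w N = interleavedProd c e w' N :=
  List.foldl_ext _ _ _ fun s j hj => by rw [h j (List.mem_range.mp hj)]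

theorem interleavedProd_mul_left (y c e : S) (w : ℕ → S) (N : ℕ) :
    interleavedProd (y * c) e w N = y * interleavedProd c e w N := by
  induction N with
  | zero => rfl
  | succ N ih => rw [interleavedProd_succ, interleavedProd_succ, ih, mul_assoc]

theorem xNC_zero (a : ℕ → S) (t : ℕ → ℕ) (f : ℕ → S) : xNC 0 a t f = a 0 := rfl

theorem xNC_succ (m : ℕ) (a : ℕ → S) (t : ℕ → ℕ) (f : ℕ → S) :
    xNC (m + 1) a t f = xNC m a t f * f (t m) * a (m + 1) := by
  simp only [xNC, List.range_succ, List.foldl_append, List.foldl_cons, List.foldl_nil]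

theorem xNC_congr {m : ℕ} {a a' : ℕ → S} {t t' : ℕ → ℕ} (f : ℕ → S)
    (ha : ∀ i ≤ m, a i = a' i) (ht : ∀ i < m, t i = t' i) : xNC m a t f = xNC m a' t' f := by
  induction m with
  | zero => exact ha 0 le_rfl
  | succ m ih =>
    rw [xNC_succ, xNC_succ, ih (fun i hi => ha i (by omega)) (fun i hi => ht i (by omega)),
      ht m m.lt_succ_self, ha (m + 1) le_rfl]

theorem xNC_update_succ (m : ℕ) (a : ℕ → S) (t : ℕ → ℕ) (f : ℕ → S) (n : ℕ) (x : S) :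
    xNC (m + 1) (Function.update a (m + 1) x) (Function.update t m n) f
      = xNC m a t f * f n * x := by
  rw [xNC_succ, Function.update_self, Function.update_self,
    xNC_congr f (fun i hi => Function.update_of_ne (by omega) _ _)
      (fun i hi => Function.update_of_ne (by omega) _ _)]

theorem update_lt_update {m n : ℕ} {t : ℕ → ℕ} (ht : ∀ i j, i < j → j < m → t i < t j)
    (htn : ∀ i < m, t i < n) {i j : ℕ} (hij : i < j) (hj : j < m + 1) :
    Function.update t m n i < Function.update t m n j := by
  rw [Function.update_of_ne (by omega)]
  rcases Nat.lt_succ_iff_lt_or_eq.mp hj with hj | rfl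
  · rw [Function.update_of_ne (by omega)]
    exact ht i j hij hj
  · rw [Function.update_self]
    exact htn i hij

/-- The separator `e` makes every gap between consecutive variable positions (`u j = none`) a
nonempty product, so the coefficients `a i` exist in `S` although `S` need not have an
identity. -/
theorem exists_xNC_eq_interleavedProd (c e : S) (u : ℕ → Option S) {N : ℕ}
    (hu : ∃ j < N, u j = none) (x : S) :
    ∃ (m : ℕ) (a : ℕ → S) (t : ℕ → ℕ), 1 ≤ m ∧ (∀ i j : ℕ, i < j → j < m → t i < t j) ∧
      (∀ i < m, t i < N) ∧
      ∀ f : ℕ → S, xNC m a t f = interleavedProd c e (fun j => (u j).getD (f j)) N * x := by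
  induction N generalizing x with
  | zero => obtain ⟨j, hj, -⟩ := hu; omega
  | succ N ih =>
    rcases huN : u N with _ | s
    · by_cases hv : ∃ j < N, u j = none
      · obtain ⟨m, a, t, hm, ht, htN, hxt⟩ := ih hv e
        refine ⟨m + 1, Function.update a (m + 1) x, Function.update t m N, by omega,
          fun i j => update_lt_update ht htN, fun i hi => ?_, fun f => ?_⟩
        · rcases Nat.lt_succ_iff_lt_or_eq.mp hi with hi | rfl
          · rw [Function.update_of_ne (by omega)]
            exact (htN i hi).trans N.lt_succ_self
          · rw [Function.update_self]
            exact N.lt_succ_self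
        · rw [xNC_update_succ, hxt, interleavedProd_succ, huN]
          simp only [Option.getD_none, mul_assoc]
      · push Not at hv
        refine ⟨1, fun i => if i = 0 then interleavedProd c e (fun j => (u j).getD e) N * e
          else x, fun _ => N, le_rfl, by omega, by simp, fun f => ?_⟩
        have hconst : interleavedProd c e (fun j => (u j).getD e) N
            = interleavedProd c e (fun j => (u j).getD (f j)) N :=
          interleavedProd_congr c e fun j hj => by
            obtain ⟨s, hs⟩ := Option.ne_none_iff_exists'.mp (hv j hj)
            simp only [hs, Option.getD_some]
        rw [xNC_succ, xNC_zero, interleavedProd_succ, huN, hconst]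
        simp [mul_assoc]
    · obtain ⟨j, hj, hju⟩ := hu
      have hjN : j < N := by
        rcases Nat.lt_succ_iff_lt_or_eq.mp hj with hj | rfl
        · exact hj
        · simp [huN] at hju
      obtain ⟨m, a, t, hm, ht, htN, hxt⟩ := ih ⟨j, hjN, hju⟩ (e * s * x)
      refine ⟨m, a, t, hm, ht, fun i hi => (htN i hi).trans N.lt_succ_self, fun f => ?_⟩
      rw [hxt, interleavedProd_succ, huN]
      simp only [Option.getD_some, mul_assoc]

end Semigroup

/-- in an arbitrary semigroup, every piecewise syndetic set is a
`J`-set (noncommutative sense). -/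
theorem piecewiseSyndetic_jSetNC {S : Type*} [Semigroup S] (A : Set S)
    (hA : PiecewiseSyndetic A) :
    ∀ G : Finset (ℕ → S), G.Nonempty →
      ∃ (m : ℕ) (a : ℕ → S) (t : ℕ → ℕ), 1 ≤ m ∧
        (∀ i j : ℕ, i < j → j < m → t i < t j) ∧
        ∀ f ∈ G, xNC m a t f ∈ A := by
  classical
  rintro G ⟨g₀, hg₀⟩
  obtain ⟨F, -, hB⟩ := hA
  obtain ⟨N, hHJ⟩ := Combinatorics.Subspace.exists_mono_in_high_dimension_fin G F Unit
  let e := g₀ 0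
  let letters (w : Fin N → G) (j : ℕ) : S := if h : j < N then (w ⟨j, h⟩ : ℕ → S) j else e
  obtain ⟨x, hx⟩ := hB (Finset.univ.image fun w => interleavedProd e e (letters w) N)
    ⟨_, Finset.mem_image_of_mem _ (Finset.mem_univ fun _ => ⟨g₀, hg₀⟩)⟩
  choose y hyF hyA using fun w =>
    (hx _ (Finset.mem_image_of_mem _ (Finset.mem_univ w)) : ∃ y ∈ F, y * _ ∈ A)
  obtain ⟨l, c, hc⟩ := hHJ fun w => ⟨y w, hyF w⟩
  let u (j : ℕ) : Option S :=
    if h : j < N then (l.idxFun ⟨j, h⟩).elim (fun g : G => some ((g : ℕ → S) j)) fun _ => none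
    else none
  obtain ⟨i₀, hi₀⟩ := l.proper ()
  obtain ⟨m, a, t, hm, ht, -, hxt⟩ :=
    exists_xNC_eq_interleavedProd (c * e) e u ⟨i₀, i₀.2, by simp [u, hi₀]⟩ x
  refine ⟨m, a, t, hm, ht, fun f hf => ?_⟩
  have hword : interleavedProd e e (letters (l fun _ => ⟨f, hf⟩)) N
      = interleavedProd e e (fun j => (u j).getD (f j)) N :=
    interleavedProd_congr e e fun j hj => by
      simp only [letters, u, dif_pos hj, Combinatorics.Subspace.apply_def]
      cases l.idxFun ⟨j, hj⟩ <;> rfl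
  rw [hxt, interleavedProd_mul_left, mul_assoc, ← hword, ← hc fun _ => ⟨f, hf⟩]
  exact hyA _
end

section
/- Let S be a semigroup and let A ⊆ S be a J-set (noncommutative sense). Then for every finite nonempty set F of sequences f : ℕ → S and every n ∈ ℕ, there exist m ∈ ℕ, a ∈ S^{m+1}, and t ∈ 𝒥_m with t(1) > n such that x(m,a,t,f) ∈ A for all f ∈ F. -/
/-! Reindexing the sequences by a strictly increasing `g` turns a witness `t` for the
reindexed family into the witness `g ∘ t` for the original one; with `g = (· + (n + 1))`
every index of the new witness exceeds `n`. -/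

theorem xNC_comp {S : Type*} [Semigroup S] (m : ℕ) (a : ℕ → S) (t g : ℕ → ℕ) (f : ℕ → S) :
    xNC m a t (f ∘ g) = xNC m a (g ∘ t) f :=
  rfl

theorem JSetNC.exists_comp_strictMono {S : Type*} [Semigroup S] {A : Set S} (hA : JSetNC A)
    {F : Finset (ℕ → S)} (hF : F.Nonempty) {g : ℕ → ℕ} (hg : StrictMono g) :
    ∃ (m : ℕ) (a : ℕ → S) (t : ℕ → ℕ), 1 ≤ m ∧
      (∀ i j : ℕ, i < j → j < m → t i < t j) ∧ g 0 ≤ t 0 ∧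
      ∀ f ∈ F, xNC m a t f ∈ A := by
  classical
  obtain ⟨m, a, t, hm, ht, hx⟩ := hA (F.image (· ∘ g)) (hF.image _)
  refine ⟨m, a, g ∘ t, hm, fun i j hij hjm => hg (ht i j hij hjm),
    hg.monotone (Nat.zero_le _), fun f hf => ?_⟩
  rw [← xNC_comp]
  exact hx _ (Finset.mem_image_of_mem _ hf)

/-- for a noncommutative `J`-set, the witnessing tuple `t` can be
chosen with `t 0 > n`. -/
theorem jSetNC_first_gt {S : Type*} [Semigroup S] (A : Set S) (hA : JSetNC A)
    (F : Finset (ℕ → S)) (hF : F.Nonempty) (n : ℕ) :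
    ∃ (m : ℕ) (a : ℕ → S) (t : ℕ → ℕ), 1 ≤ m ∧
      (∀ i j : ℕ, i < j → j < m → t i < t j) ∧ n < t 0 ∧
      ∀ f ∈ F, xNC m a t f ∈ A := by
  obtain ⟨m, a, t, hm, ht, hn, hx⟩ :=
    hA.exists_comp_strictMono hF (add_left_strictMono (a := n + 1))
  exact ⟨m, a, t, hm, ht, by simpa using hn, hx⟩
end

section
/- (Stronger Central Sets Theorem, commutative case) Let (S,+) be a commutative semigroup and let C be a central subset of S. Then there exist functions α : 𝒫_f(ℕ→S) → S and H : 𝒫_f(ℕ→S) → 𝒫_f(ℕ) such that: (1) if F ⊊ G then max H(F) < min H(G); (2) whenever r ∈ ℕ, G₁ ⊊ G₂ ⊊ ⋯ ⊊ G_r are finite nonempty sets of sequences, and f_i ∈ G_i for each i, then Σ_{i=1}^r (α(G_i) + Σ_{t∈H(G_i)} f_i(t)) ∈ C. -/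
/-! A central set `C` belongs to an idempotent ultrafilter `p` all of whose members are piecewise
syndetic: the ultrafilters finer than the filter generated by the sets `C_F` and by the complements
of the sets that are not piecewise syndetic form a nonempty closed subsemigroup of `βS`, so they
contain an idempotent; partition regularity of piecewise syndeticity is what makes those
complements a filter base.
By the Hales–Jewett theorem every piecewise syndetic set is a `J`-set, with the index set `H` as far
out in `ℕ` as we like. For `C⋆ = {x ∈ C | -x + C ∈ p}` we have `-x + C⋆ ∈ p` whenever `x ∈ C⋆`.
Hence `α(F)` and `H(F)` can be chosen by recursion on `F`, ordered by inclusion, so that every sum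
along a chain ending at `F` lies in `C⋆`: at `F` one applies the `J`-set property to
`C⋆ ∩ ⋂_d (-d + C⋆)`, with `d` ranging over the finitely many sums along chains ending strictly
below `F`. -/

open Filter Combinatorics

attribute [local instance] Ultrafilter.add Ultrafilter.addSemigroup

section WithZeroSums

variable {S : Type*} [AddCommSemigroup S]

theorem WithZero.exists_coe_eq_coe_add (s : S) (b : WithZero S) :
    ∃ a : S, (a : WithZero S) = s + b := by
  induction b using WithZero.recZeroCoe with
  | zero => exact ⟨s, (add_zero _).symm⟩
  | coe b => exact ⟨s + b, WithZero.coe_add s b⟩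

theorem WithZero.exists_coe_eq_sum {ι : Type*} {s : Finset ι} (hs : s.Nonempty) (f : ι → S) :
    ∃ a : S, (a : WithZero S) = ∑ i ∈ s, (f i : WithZero S) := by
  induction hs using Finset.Nonempty.cons_induction with
  | singleton i => exact ⟨f i, by simp⟩
  | cons i s hi _ ih =>
    obtain ⟨a, ha⟩ := ih
    rw [Finset.sum_cons, ← ha]
    exact WithZero.exists_coe_eq_coe_add _ _

theorem coe_foldl_add (f : ℕ → S) (l : List ℕ) (x : S) :
    ((l.foldl (fun s t => s + f t) x : S) : WithZero S) =
      x + (l.map fun t => (f t : WithZero S)).sum := by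
  induction l generalizing x with
  | nil => simp
  | cons a l ih => simp [ih, add_assoc]

theorem coe_fSum {H : Finset ℕ} (hH : H.Nonempty) (f : ℕ → S) :
    ((fSum H f : S) : WithZero S) = ∑ t ∈ H, (f t : WithZero S) := by
  have hsum : ∑ t ∈ H, (f t : WithZero S) =
      ((H.sort (· ≤ ·)).map fun t => (f t : WithZero S)).sum := by
    rw [Finset.sum, ← Finset.sort_eq (s := H) (r := (· ≤ ·)), Multiset.map_coe, Multiset.sum_coe]
  rw [hsum, fSum]
  rcases h : H.sort (· ≤ ·) with _ | ⟨a, l⟩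
  · have := H.length_sort (· ≤ ·)
    simp only [h, List.length_nil] at this
    exact absurd this.symm hH.card_pos.ne'
  · simp [coe_foldl_add]

end WithZeroSums

theorem Combinatorics.Line.exists_sum_apply_eq {α ι M : Type*} [Fintype ι] [AddCommMonoid M]
    (l : Line α ι) (φ : ι → α → M) :
    ∃ b : M, ∀ x, ∑ i, φ i (l x i) = ∑ i with l.idxFun i = none, φ i x + b := by
  classical
  refine ⟨∑ i with l.idxFun i ≠ none, ((l.idxFun i).map (φ i)).getD 0, fun x => ?_⟩
  rw [← Finset.sum_filter_add_sum_filter_not Finset.univ (fun i => l.idxFun i = none)]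
  congr 1
  · exact Finset.sum_congr rfl fun i hi => by rw [l.apply_none x i (Finset.mem_filter.1 hi).2]
  · refine Finset.sum_congr rfl fun i hi => ?_
    obtain ⟨a, ha⟩ := Option.ne_none_iff_exists'.1 (Finset.mem_filter.1 hi).2
    simp [ha]

section PiecewiseSyndetic

open scoped Pointwise

variable {S : Type*} [AddSemigroup S] {A B : Set S}

theorem PiecewiseSyndeticAdd.mono (hA : PiecewiseSyndeticAdd A) (hAB : A ⊆ B) :
    PiecewiseSyndeticAdd B := by
  obtain ⟨G, hG, hT⟩ := hA
  refine ⟨G, hG, fun E hE => ?_⟩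
  obtain ⟨x, hx⟩ := hT E hE
  exact ⟨x, fun e he => (hx e he).imp fun t ⟨ht, htA⟩ => ⟨ht, hAB htA⟩⟩

theorem PiecewiseSyndeticAdd.nonempty (hA : PiecewiseSyndeticAdd A) : A.Nonempty := by
  obtain ⟨G, ⟨t, ht⟩, hT⟩ := hA
  obtain ⟨x, hx⟩ := hT {t} (Finset.singleton_nonempty t)
  obtain ⟨_, _, hA⟩ := hx t (Finset.mem_singleton_self t)
  exact ⟨_, hA⟩

theorem PiecewiseSyndeticAdd.or_of_union (hAB : PiecewiseSyndeticAdd (A ∪ B)) :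
    PiecewiseSyndeticAdd A ∨ PiecewiseSyndeticAdd B := by
  classical
  by_contra! ⟨hA, hB⟩
  obtain ⟨G, hG, hT⟩ := hAB
  simp only [PiecewiseSyndeticAdd, ThickAdd, not_exists, not_and, not_forall] at hA hB
  obtain ⟨D, hD, hBD⟩ := hB G hG
  obtain ⟨E, hE, hAE⟩ := hA (G + D) (hG.add hD)
  obtain ⟨x, hx⟩ := hT (D + E) (hD.add hE)
  obtain ⟨e, he, hAe⟩ := hAE x
  obtain ⟨d, hd, hBd⟩ := hBD (e + x)
  obtain ⟨t, ht, hAB⟩ := hx (d + e) (Finset.add_mem_add hd he)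
  rcases hAB with hA' | hB'
  · exact hAe ⟨t + d, Finset.add_mem_add ht hd, by simpa only [add_assoc] using hA'⟩
  · exact hBd ⟨t, ht, by simpa only [add_assoc] using hB'⟩


theorem PiecewiseSyndeticAdd.of_eventually_add_mem (r : Ultrafilter S)
    (h : PiecewiseSyndeticAdd {x | ∀ᶠ y in r, x + y ∈ B}) : PiecewiseSyndeticAdd B := by
  obtain ⟨G, hG, hT⟩ := h
  refine ⟨G, hG, fun E hE => ?_⟩
  obtain ⟨x, hx⟩ := hT E hE
  choose! t ht htB using hx
  obtain ⟨y, hy⟩ := Ultrafilter.nonempty_of_mem ((Filter.biInter_finset_mem E).2 htB)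
  refine ⟨x + y, fun e he => ⟨t e, ht e he, ?_⟩⟩
  simpa only [add_assoc, Set.mem_ofPred_eq] using Set.mem_iInter₂.1 hy e he

theorem CollectionwisePSAdd.piecewiseSyndeticAdd {𝒜 : Set (Set S)} (h𝒜 : CollectionwisePSAdd 𝒜)
    (hB : B ∈ 𝒜) : PiecewiseSyndeticAdd B := by
  obtain ⟨G, x, hx⟩ := h𝒜
  have hB' : (({B} : Finset (Set S)) : Set (Set S)) ⊆ 𝒜 := by simpa using hB
  have key := fun F => hx F {B} {B} (Finset.singleton_nonempty B) hB' subset_rfl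
  obtain ⟨t, ht, -⟩ := key {x {B} ∅} _ (Finset.mem_singleton_self _)
  exact ⟨G {B}, ⟨t, ht⟩, fun E _ => ⟨x {B} E, fun e he => by simpa using key E e he⟩⟩

def Filter.coPiecewiseSyndeticAdd (S : Type*) [AddSemigroup S] : Filter S :=
  Filter.comk (fun s => ¬PiecewiseSyndeticAdd s) (fun h => Set.not_nonempty_empty h.nonempty)
    (fun _ ht _ hst hs => ht (hs.mono hst)) (fun _ hs _ ht h => h.or_of_union.elim hs ht)

end PiecewiseSyndetic

theorem Ultrafilter.le_comk_iff {α : Type*} (U : Ultrafilter α) {p : Set α → Prop}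
    {he hmono hunion} :
    ↑U ≤ Filter.comk p he hmono hunion ↔ ∀ s ∈ U, ¬p s := by
  refine ⟨fun h s hs hps => ?_, fun h t ht => ?_⟩
  · exact Ultrafilter.compl_notMem_iff.2 hs (h (by simpa using hps))
  · by_contra htU
    exact h _ (Ultrafilter.compl_mem_iff_notMem.2 htU) (Filter.mem_comk.1 ht)

section IdempotentUltrafilter

variable {S : Type*} [AddSemigroup S]

theorem Ultrafilter.exists_add_idempotent_le (f : Filter S) [f.NeBot]
    (hf : ∀ U V : Ultrafilter S, ↑U ≤ f → ↑V ≤ f → ↑(U + V) ≤ f) :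
    ∃ U : Ultrafilter S, U + U = U ∧ ↑U ≤ f := by
  have hclosed : IsClosed {U : Ultrafilter S | ↑U ≤ f} := by
    simp only [Filter.le_def, Set.ofPred_forall]
    exact isClosed_biInter fun s _ => ultrafilter_isClosed_basic s
  obtain ⟨U, hU, hUU⟩ := exists_idempotent_in_compact_add_subsemigroup
    Ultrafilter.continuous_add_left _ ⟨Ultrafilter.of f, Ultrafilter.of_le f⟩ hclosed.isCompact
    fun U hU V hV => hf U V hU hV
  exact ⟨U, hUU, hU⟩

theorem CentralAdd.exists_add_idempotent_ultrafilter {C : Set S} (hC : CentralAdd C) :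
    ∃ p : Ultrafilter S, p + p = p ∧ C ∈ p ∧ ∀ B ∈ p, PiecewiseSyndeticAdd B := by
  obtain ⟨I, D, hI, hDC, hdir, hshift, hcps⟩ := hC
  have hps : ∀ N, PiecewiseSyndeticAdd (D N) := fun N => hcps.piecewiseSyndeticAdd ⟨N, rfl⟩
  have hdir' : Directed (· ≥ ·) fun N => 𝓟 (D N) := fun N M =>
    (hdir N M).imp fun _ hP => ⟨principal_mono.2 hP.1, principal_mono.2 hP.2⟩
  have hD : ∀ (U : Ultrafilter S) N, ↑U ≤ ⨅ N, 𝓟 (D N) → D N ∈ U := fun _ N h =>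
    le_principal_iff.1 (h.trans (iInf_le _ N))
  have hPS : ∀ U : Ultrafilter S, ↑U ≤ Filter.coPiecewiseSyndeticAdd S →
      ∀ B ∈ U, PiecewiseSyndeticAdd B := fun U h B hB => not_not.1 ((U.le_comk_iff).1 h B hB)
  let f := (⨅ N, 𝓟 (D N)) ⊓ Filter.coPiecewiseSyndeticAdd S
  have : f.NeBot := by
    refine Filter.inf_neBot_iff.2 fun s hs t ht => ?_
    obtain ⟨N, hN⟩ := (Filter.mem_iInf_of_directed hdir' s).1 hs
    by_contra h
    exact Filter.mem_comk.1 ht ((hps N).mono fun x hx hxt => h ⟨x, mem_principal.1 hN hx, hxt⟩)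
  obtain ⟨p, hpp, hpf⟩ := Ultrafilter.exists_add_idempotent_le f fun U V hU hV => by
    refine le_inf (le_iInf fun N => le_principal_iff.2 ?_) ((U + V).le_comk_iff.2 fun B hB => ?_)
    · refine (Ultrafilter.eventually_add U V (· ∈ D N)).2 ?_
      filter_upwards [hD U N (hU.trans inf_le_left)] with x hx
      obtain ⟨M, hM⟩ := hshift N x hx
      exact mem_of_superset (hD V M (hV.trans inf_le_left)) hM
    · exact not_not.2 (.of_eventually_add_mem V
        (hPS U (hU.trans inf_le_right) _ ((Ultrafilter.eventually_add U V (· ∈ B)).1 hB)))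
  exact ⟨p, hpp, mem_of_superset (hD p hI.some (hpf.trans inf_le_left)) (hDC _),
    hPS p (hpf.trans inf_le_right)⟩

def starSet (p : Ultrafilter S) (A : Set S) : Set S :=
  {x ∈ A | ∀ᶠ y in p, x + y ∈ A}

variable {p : Ultrafilter S} {A : Set S}

theorem starSet_mem (hp : p + p = p) (hA : A ∈ p) : starSet p A ∈ p :=
  inter_mem hA (by rwa [hp] : A ∈ p + p)

theorem eventually_add_mem_starSet (hp : p + p = p) {x : S} (hx : x ∈ starSet p A) :
    ∀ᶠ y in p, x + y ∈ starSet p A := by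
  have h : ∀ᶠ y in p, ∀ᶠ z in p, x + y + z ∈ A := by
    simpa only [add_assoc] using
      (Ultrafilter.eventually_add p p (x + · ∈ A)).1 (by rw [hp]; exact hx.2)
  filter_upwards [hx.2, h] with y hy hyz using ⟨hy, hyz⟩

end IdempotentUltrafilter

section JSet

variable {S : Type*} [AddCommSemigroup S]

theorem PiecewiseSyndeticAdd.exists_add_fSum_mem {A : Set S} (hA : PiecewiseSyndeticAdd A)
    {F : Finset (ℕ → S)} (hF : F.Nonempty) (n : ℕ) :
    ∃ a H, H.Nonempty ∧ (∀ t ∈ H, n ≤ t) ∧ ∀ f ∈ F, a + fSum H f ∈ A := by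
  classical
  obtain ⟨G, ⟨t₀, ht₀⟩, hT⟩ := hA
  have : Nonempty F := hF.to_subtype
  obtain ⟨ι, _, hι⟩ := Line.exists_mono_in_high_dimension F G
  have : Nonempty ι := by
    obtain ⟨l, -⟩ := hι fun _ => ⟨t₀, ht₀⟩
    exact ⟨l.proper.choose⟩
  let e : ι ↪ ℕ := ⟨fun i => n + Fintype.equivFin ι i,
    fun i j h => (Fintype.equivFin ι).injective (Fin.ext (by simpa using h))⟩
  -- A word `w : ι → F` is read as `Σ_i (w i) (e i)`; along a line the variable coordinates
  -- become `H` and the fixed ones are absorbed into `a`.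
  choose val hval using fun w : ι → F =>
    WithZero.exists_coe_eq_sum Finset.univ_nonempty fun i => (w i : ℕ → S) (e i)
  obtain ⟨x, hx⟩ := hT (Finset.univ.image val) (Finset.univ_nonempty.image val)
  choose col hcol using fun w => hx (val w) (Finset.mem_image_of_mem val (Finset.mem_univ w))
  obtain ⟨l, ⟨t, ht⟩, hl⟩ := hι fun w => ⟨col w, (hcol w).1⟩
  obtain ⟨b, hb⟩ := l.exists_sum_apply_eq fun i (f : F) => ((f : ℕ → S) (e i) : WithZero S)
  obtain ⟨a, ha⟩ := WithZero.exists_coe_eq_coe_add (t + x) b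
  let V : Finset ι := {i | l.idxFun i = none}
  have hV : V.Nonempty := ⟨l.proper.choose, by simpa [V] using l.proper.choose_spec⟩
  refine ⟨a, V.map e, hV.map, Finset.forall_mem_map.2 fun _ _ => Nat.le_add_right _ _,
    fun f hf => ?_⟩
  have h := (hcol (l ⟨f, hf⟩)).2
  rw [show col (l ⟨f, hf⟩) = t from congrArg Subtype.val (hl ⟨f, hf⟩)] at h
  convert h using 1
  apply WithZero.coe_injective
  push_cast [coe_fSum hV.map, ha, hval, hb, Finset.sum_map]
  abel

end JSet

theorem seqSum_succ {S : Type*} [AddSemigroup S] (v : ℕ → S) (r : ℕ) :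
    seqSum v (r + 1) = seqSum v r + v (r + 1) := by
  simp [seqSum, List.range_succ]

namespace CentralSets

open scoped Pointwise

variable {S : Type*} [AddCommSemigroup S]

/-- The data chosen at a finite set `F` of sequences: `α(F)`, `H(F)`, and the sums
`Σ_i (α(G_i) + Σ_{t ∈ H(G_i)} f_i(t))` along all chains `G_0 ⊊ ⋯ ⊊ G_r = F` with `f_i ∈ G_i`. -/
structure Stage (S : Type*) where
  α : S
  H : Finset ℕ
  sums : Finset S

open scoped Classical in
noncomputable def Stage.extend (F : Finset (ℕ → S)) (K : Finset S) (a : S) (H : Finset ℕ) :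
    Stage S :=
  ⟨a, H, F.image (a + fSum H ·) ∪ (K + F.image (a + fSum H ·))⟩

def Stage.IsAdmissible (A : Set S) (n : ℕ) (σ : Stage S) : Prop :=
  σ.H.Nonempty ∧ (∀ t ∈ σ.H, n ≤ t) ∧ ↑σ.sums ⊆ A

theorem Stage.mem_extend_sums {F : Finset (ℕ → S)} {K : Finset S} {a : S} {H : Finset ℕ}
    {f : ℕ → S} (hf : f ∈ F) : a + fSum H f ∈ (Stage.extend F K a H).sums := by
  classical
  exact Finset.mem_union_left _ (Finset.mem_image_of_mem _ hf)

theorem Stage.add_mem_extend_sums {F : Finset (ℕ → S)} {K : Finset S} {a : S} {H : Finset ℕ}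
    {f : ℕ → S} {d : S} (hd : d ∈ K) (hf : f ∈ F) :
    d + (a + fSum H f) ∈ (Stage.extend F K a H).sums := by
  classical
  exact Finset.mem_union_right _ (Finset.add_mem_add hd (Finset.mem_image_of_mem _ hf))

theorem exists_isAdmissible_extend {p : Ultrafilter S} (hp : ∀ B ∈ p, PiecewiseSyndeticAdd B)
    {A : Set S} (hA : A ∈ p) (hshift : ∀ x ∈ A, ∀ᶠ y in p, x + y ∈ A)
    (F : Finset (ℕ → S)) {K : Finset S} (hK : ↑K ⊆ A) (n : ℕ) :
    ∃ aH : S × Finset ℕ, (Stage.extend F K aH.1 aH.2).IsAdmissible A n := by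
  classical
  rcases F.eq_empty_or_nonempty with rfl | hF
  · obtain ⟨a, -⟩ := p.nonempty_of_mem hA
    exact ⟨(a, {n}), Finset.singleton_nonempty n, by simp [Stage.extend], by simp [Stage.extend]⟩
  have hB : ∀ᶠ y in p, y ∈ A ∧ ∀ d ∈ K, d + y ∈ A :=
    (eventually_mem_set.2 hA).and ((eventually_all_finset K).2 fun d hd => hshift d (hK hd))
  obtain ⟨a, H, hH, hHn, hmem⟩ := (hp _ hB).exists_add_fSum_mem hF n
  refine ⟨(a, H), hH, hHn, ?_⟩
  simp only [Stage.extend, Finset.coe_union, Finset.coe_add, Finset.coe_image,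
    Set.union_subset_iff]
  constructor
  · rintro _ ⟨f, hf, rfl⟩
    exact (hmem f hf).1
  · rintro _ ⟨d, hd, _, ⟨f, hf, rfl⟩, rfl⟩
    exact (hmem f hf).2 d hd

variable [Nonempty S] (A : Set S)

open scoped Classical in
noncomputable def stage (F : Finset (ℕ → S)) : Stage S :=
  let K := F.ssubsets.attach.biUnion fun G => (stage G).sums
  let n := F.ssubsets.attach.sup (fun G => (stage G).H.sup id) + 1
  -- An admissible choice exists only once the stages below `F` are known to be admissible
  -- (`stage_spec`), hence `Classical.epsilon`.
  let aH := Classical.epsilon fun aH : S × Finset ℕ =>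
    (Stage.extend F K aH.1 aH.2).IsAdmissible A n
  Stage.extend F K aH.1 aH.2
termination_by F.card
decreasing_by all_goals exact Finset.card_lt_card (Finset.mem_ssubsets.1 G.2)

open scoped Classical in
theorem stage_eq_extend (F : Finset (ℕ → S)) :
    stage A F = Stage.extend F (F.ssubsets.attach.biUnion fun G => (stage A G).sums)
      (stage A F).α (stage A F).H := by
  rw [stage]
  rfl

theorem stage_spec {p : Ultrafilter S} (hp : ∀ B ∈ p, PiecewiseSyndeticAdd B) (hA : A ∈ p)
    (hshift : ∀ x ∈ A, ∀ᶠ y in p, x + y ∈ A) (F : Finset (ℕ → S)) :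
    (stage A F).H.Nonempty ∧ (∀ G ⊂ F, ∀ s ∈ (stage A G).H, ∀ u ∈ (stage A F).H, s < u) ∧
      ↑(stage A F).sums ⊆ A := by
  classical
  induction F using Finset.strongInduction with
  | H F ih =>
  have hK : ↑(F.ssubsets.attach.biUnion fun G => (stage A G).sums) ⊆ A := by
    intro d hd
    obtain ⟨G, -, hdG⟩ := Finset.mem_biUnion.1 hd
    exact (ih G (Finset.mem_ssubsets.1 G.2)).2.2 hdG
  obtain ⟨hne, hn, hsums⟩ : (stage A F).IsAdmissible A
      (F.ssubsets.attach.sup (fun G => (stage A G).H.sup id) + 1) := by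
    rw [stage]
    exact Classical.epsilon_spec (exists_isAdmissible_extend hp hA hshift F hK _)
  refine ⟨hne, fun G hG s hs u hu => ?_, hsums⟩
  have hsG : s ≤ F.ssubsets.attach.sup (fun G => (stage A G).H.sup id) :=
    (Finset.le_sup (f := id) hs).trans
      (Finset.le_sup (f := fun G : F.ssubsets => (stage A G).H.sup id)
        (Finset.mem_attach _ ⟨G, Finset.mem_ssubsets.2 hG⟩))
  exact hsG.trans_lt (hn u hu)

theorem seqSum_mem_stage_sums (r : ℕ) (g : ℕ → Finset (ℕ → S)) (f : ℕ → ℕ → S)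
    (hg : ∀ i j, i < j → j ≤ r → g i ⊂ g j) (hf : ∀ i ≤ r, f i ∈ g i) :
    seqSum (fun i => (stage A (g i)).α + fSum (stage A (g i)).H (f i)) r ∈
      (stage A (g r)).sums := by
  classical
  induction r with
  | zero =>
    rw [stage_eq_extend]
    exact Stage.mem_extend_sums (hf 0 le_rfl)
  | succ r ih =>
    rw [seqSum_succ, stage_eq_extend A (g (r + 1))]
    refine Stage.add_mem_extend_sums (Finset.mem_biUnion.2 ⟨⟨g r, ?_⟩, Finset.mem_attach _ _, ?_⟩)
      (hf _ le_rfl)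
    · exact Finset.mem_ssubsets.2 (hg r (r + 1) r.lt_succ_self le_rfl)
    · exact ih (fun i j hij hj => hg i j hij (hj.trans r.le_succ))
        fun i hi => hf i (hi.trans r.le_succ)

end CentralSets

/-- Chains `G₁ ⊊ ⋯ ⊊ G_{r+1}` are coded by `g : ℕ → Finset (ℕ → S)` restricted to
indices `≤ r`. -/
theorem strongerCentralSetsTheorem_comm {S : Type*} [AddCommSemigroup S]
    (C : Set S) (hC : CentralAdd C) :
    ∃ (α : Finset (ℕ → S) → S) (H : Finset (ℕ → S) → Finset ℕ),
      (∀ F : Finset (ℕ → S), F.Nonempty → (H F).Nonempty) ∧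
      (∀ F G : Finset (ℕ → S), F.Nonempty → F ⊂ G →
        ∀ s ∈ H F, ∀ u ∈ H G, s < u) ∧
      (∀ (r : ℕ) (g : ℕ → Finset (ℕ → S)) (f : ℕ → ℕ → S),
        (g 0).Nonempty → (∀ i j : ℕ, i < j → j ≤ r → g i ⊂ g j) →
        (∀ i : ℕ, i ≤ r → f i ∈ g i) →
        seqSum (fun i => α (g i) + fSum (H (g i)) (f i)) r ∈ C) := by
  obtain ⟨p, hpp, hCp, hPS⟩ := hC.exists_add_idempotent_ultrafilter
  have : Nonempty S := ⟨(p.nonempty_of_mem hCp).some⟩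
  have hspec := CentralSets.stage_spec (starSet p C) hPS (starSet_mem hpp hCp)
    fun _ hx => eventually_add_mem_starSet hpp hx
  refine ⟨fun F => (CentralSets.stage (starSet p C) F).α,
    fun F => (CentralSets.stage (starSet p C) F).H,
    fun F _ => (hspec F).1, fun F G _ hFG => (hspec G).2.1 F hFG, fun r g f _ hg hf => ?_⟩
  exact ((hspec (g r)).2.2 (CentralSets.seqSum_mem_stage_sums _ r g f hg hf)).1
end

section
/- In the semigroup (ℕ,+), every central set A satisfies Furstenberg's Central Sets Theorem: for each k ∈ ℕ and sequences ⟨y_{i,n}⟩_{n=1}^∞ in ℤ for i ∈ {1,…,k}, there exist sequences ⟨a_n⟩ in ℕ and ⟨H_n⟩ in 𝒫_f(ℕ) with max H_n < min H_{n+1}, such that for each i ∈ {1,…,k} and each F ∈ 𝒫_f(ℕ), Σ_{n∈F}(a_n + Σ_{t∈H_n} y_{i,t}) ∈ A. -/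
open Filter Finset

section LeftIdeal

variable {M : Type*} [AddSemigroup M] [TopologicalSpace M]

def IsClosedAddLeftIdeal (L : Set M) : Prop :=
  L.Nonempty ∧ IsClosed L ∧ ∀ p ∈ L, ∀ q : M, q + p ∈ L

lemma isClosedAddLeftIdeal_range_add [CompactSpace M] [T2Space M] {r : M}
    (hr : Continuous (· + r)) : IsClosedAddLeftIdeal (Set.range (· + r)) := by
  refine ⟨⟨r + r, r, rfl⟩, (isCompact_range hr).isClosed, ?_⟩
  rintro _ ⟨w, rfl⟩ q
  exact ⟨q + w, add_assoc q w r⟩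

lemma IsClosedAddLeftIdeal.exists_minimal [CompactSpace M] {L₀ : Set M}
    (h₀ : IsClosedAddLeftIdeal L₀) : ∃ L ⊆ L₀, Minimal IsClosedAddLeftIdeal L := by
  suffices hchain : ∀ c ⊆ {X | IsClosedAddLeftIdeal X ∧ X ⊆ L₀}, IsChain (· ⊆ ·) c →
      c.Nonempty → ∃ lb ∈ {X | IsClosedAddLeftIdeal X ∧ X ⊆ L₀}, ∀ X ∈ c, lb ⊆ X by
    obtain ⟨L, hL₀, hL⟩ := zorn_superset_nonempty _ hchain L₀ ⟨h₀, subset_rfl⟩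
    exact ⟨L, hL₀, hL.prop.1, fun X hX hXL => hL.2 ⟨hX, hXL.trans hL₀⟩ hXL⟩
  intro c hc hchain hcne
  have : Nonempty c := hcne.to_subtype
  refine ⟨⋂₀ c, ⟨⟨?_, isClosed_sInter fun X hX => (hc hX).1.2.1, ?_⟩, ?_⟩,
    fun X hX => Set.sInter_subset_of_mem hX⟩
  · exact IsCompact.nonempty_sInter_of_directed_nonempty_isCompact_isClosed
      (fun X hX Y hY => (hchain.total hX hY).elim (fun h => ⟨X, hX, subset_rfl, h⟩)
        fun h => ⟨Y, hY, h, subset_rfl⟩) (fun X hX => (hc hX).1.1)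
      (fun X hX => (hc hX).1.2.1.isCompact) (fun X hX => (hc hX).1.2.1)
  · exact fun p hp q => Set.mem_sInter.2 fun X hX => (hc hX).1.2.2 p (hp X hX) q
  · obtain ⟨X, hX⟩ := hcne
    exact (Set.sInter_subset_of_mem hX).trans (hc hX).2

lemma range_add_eq_of_minimal [CompactSpace M] [T2Space M] {L : Set M}
    (hL : Minimal IsClosedAddLeftIdeal L) {r : M} (hr : r ∈ L) (hcont : Continuous (· + r)) :
    Set.range (· + r) = L :=
  have hsub : Set.range (· + r) ⊆ L := Set.range_subset_iff.2 fun q => hL.prop.2.2 r hr q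
  hsub.antisymm (hL.2 (isClosedAddLeftIdeal_range_add hcont) hsub)

end LeftIdeal

section Ultrafilter

attribute [local instance] Ultrafilter.add Ultrafilter.addSemigroup

variable {S : Type*}

lemma Ultrafilter.mem_add_iff [Add S] {U V : Ultrafilter S} {B : Set S} :
    B ∈ U + V ↔ {m | (m + ·) ⁻¹' B ∈ V} ∈ U :=
  Iff.rfl

lemma Ultrafilter.exists_forall_mem_of_directed {ι : Type*} [Nonempty ι] {W : ι → Set S}
    (hd : Directed (· ⊇ ·) W) (hne : ∀ i, (W i).Nonempty) : ∃ u : Ultrafilter S, ∀ i, W i ∈ u := by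
  have : NeBot (⨅ i, 𝓟 (W i)) :=
    iInf_neBot_of_directed' (hd.mono_comp (rb := (· ≥ ·)) _ fun _ _ h => principal_mono.2 h)
      fun i => principal_neBot_iff.2 (hne i)
  exact ⟨Ultrafilter.of _, fun i => Ultrafilter.of_le _ (mem_iInf_of_mem i (mem_principal_self _))⟩

section AddSemigroup

variable [AddSemigroup S]

theorem CollectionwisePSAdd.exists_ultrafilter_forall_translate_mem_add [Nonempty S]
    {𝒜 : Set (Set S)} (h𝒜 : CollectionwisePSAdd 𝒜) :
    ∃ u : Ultrafilter S, ∀ (w : Ultrafilter S) (ℱ : Finset (Set S)), ↑ℱ ⊆ 𝒜 →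
      ∃ t : S, (t + ·) ⁻¹' ⋂₀ ↑ℱ ∈ w + u := by
  classical
  obtain ⟨G, x, hGx⟩ := h𝒜
  let Z : Finset S × Finset (Set S) → Set S := fun p =>
    {z | ∀ y ∈ p.1, ∀ ℱ ⊆ p.2, ℱ.Nonempty → ↑ℱ ⊆ 𝒜 → ∃ t ∈ G ℱ, t + (y + z) ∈ ⋂₀ ↑ℱ}
  have hZ : Antitone Z := fun p p' hp z hz y hy ℱ hℱ => hz y (hp.1 hy) ℱ (hℱ.trans hp.2)
  obtain ⟨u, hu⟩ := Ultrafilter.exists_forall_mem_of_directed hZ.directed_ge fun p =>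
    ⟨x (p.2.filter (· ∈ 𝒜)) p.1, fun y hy ℱ hℱ hne hℱ𝒜 =>
      hGx p.1 ℱ _ hne (fun B hB => (mem_filter.1 hB).2)
        (fun B hB => mem_filter.2 ⟨hℱ hB, hℱ𝒜 hB⟩) y hy⟩
  refine ⟨u, fun w ℱ hℱ => ?_⟩
  obtain rfl | hne := ℱ.eq_empty_or_nonempty
  · exact ⟨Classical.arbitrary S, by
      simp only [coe_empty, Set.sInter_empty, Set.preimage_univ]; exact univ_mem⟩
  have hD : ⋃ t ∈ (G ℱ : Set S), (t + ·) ⁻¹' ⋂₀ ↑ℱ ∈ w + u :=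
    Ultrafilter.mem_add_iff.2 <| univ_mem' fun m => mem_of_superset (hu ({m}, ℱ)) fun z hz => by
      obtain ⟨t, ht, htz⟩ := hz m (mem_singleton_self m) ℱ subset_rfl hne hℱ
      exact Set.mem_biUnion ht htz
  obtain ⟨t, -, ht⟩ := (Ultrafilter.finite_biUnion_mem_iff (G ℱ).finite_toSet).1 hD
  exact ⟨t, ht⟩

theorem Ultrafilter.exists_forall_mem_add {𝒜 : Set (Set S)} {r : Ultrafilter S}
    (hr : ∀ ℱ : Finset (Set S), ↑ℱ ⊆ 𝒜 → ∃ t : S, (t + ·) ⁻¹' ⋂₀ ↑ℱ ∈ r) :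
    ∃ v : Ultrafilter S, ∀ B ∈ 𝒜, B ∈ v + r := by
  classical
  let W : Finset (Set S) → Set S := fun ℱ => {t | (t + ·) ⁻¹' ⋂₀ ↑(ℱ.filter (· ∈ 𝒜)) ∈ r}
  have hW : Antitone W := fun ℱ ℱ' h t ht =>
    mem_of_superset ht <| Set.preimage_mono <|
      Set.sInter_subset_sInter <| coe_subset.2 <| filter_subset_filter _ h
  obtain ⟨v, hv⟩ := Ultrafilter.exists_forall_mem_of_directed hW.directed_ge fun ℱ =>
    hr _ (fun B hB => (mem_filter.1 hB).2)
  refine ⟨v, fun B hB => Ultrafilter.mem_add_iff.2 ?_⟩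
  have hB' : ({B} : Finset (Set S)).filter (· ∈ 𝒜) = {B} := by simp [hB]
  simpa only [W, hB', coe_singleton, Set.sInter_singleton] using hv {B}

theorem CollectionwisePSAdd.exists_minimal_mem [Nonempty S] {𝒜 : Set (Set S)}
    (h𝒜 : CollectionwisePSAdd 𝒜) :
    ∃ L : Set (Ultrafilter S), Minimal IsClosedAddLeftIdeal L ∧ ∃ p ∈ L, ∀ B ∈ 𝒜, B ∈ p := by
  obtain ⟨u, hu⟩ := h𝒜.exists_ultrafilter_forall_translate_mem_add
  obtain ⟨L, hLu, hL⟩ :=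
    (isClosedAddLeftIdeal_range_add (Ultrafilter.continuous_add_left u)).exists_minimal
  obtain ⟨r, hr⟩ := hL.prop.1
  obtain ⟨w, rfl⟩ := hLu hr
  obtain ⟨v, hv⟩ := Ultrafilter.exists_forall_mem_add (hu w)
  exact ⟨L, hL, v + (w + u), hL.prop.2.2 _ hr v, hv⟩

theorem IsClosedAddLeftIdeal.exists_idempotent_forall_mem {L : Set (Ultrafilter S)}
    (hL : IsClosedAddLeftIdeal L) {𝒞 : Set (Set S)}
    (h𝒞 : ∀ B ∈ 𝒞, ∀ y ∈ B, ∃ B' ∈ 𝒞, B' ⊆ (y + ·) ⁻¹' B) {p : Ultrafilter S} (hpL : p ∈ L)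
    (hp : ∀ B ∈ 𝒞, B ∈ p) : ∃ q ∈ L, q + q = q ∧ ∀ B ∈ 𝒞, B ∈ q := by
  have hclosed : IsClosed {s : Ultrafilter S | ∀ B ∈ 𝒞, B ∈ s} := by
    simpa only [Set.ofPred_forall] using isClosed_biInter fun B _ => ultrafilter_isClosed_basic B
  set T := L ∩ {s | ∀ B ∈ 𝒞, B ∈ s}
  have hadd : ∀ s ∈ T, ∀ s' ∈ T, s + s' ∈ T := by
    rintro s ⟨-, hs⟩ s' ⟨hs'L, hs'⟩
    refine ⟨hL.2.2 s' hs'L s, fun B hB => Ultrafilter.mem_add_iff.2 <| mem_of_superset (hs B hB) ?_⟩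
    intro y hy
    obtain ⟨B', hB', hB'y⟩ := h𝒞 B hB y hy
    exact mem_of_superset (hs' B' hB') hB'y
  obtain ⟨q, ⟨hqL, hq⟩, hqq⟩ := exists_idempotent_in_compact_add_subsemigroup
    Ultrafilter.continuous_add_left T ⟨p, hpL, hp⟩ (hL.2.1.inter hclosed).isCompact hadd
  exact ⟨q, hqL, hqq, hq⟩

theorem piecewiseSyndeticAdd_of_mem_minimal {L : Set (Ultrafilter S)}
    (hL : Minimal IsClosedAddLeftIdeal L) {q : Ultrafilter S} (hqL : q ∈ L) {B : Set S}
    (hB : B ∈ q) : PiecewiseSyndeticAdd B := by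
  -- Each `w ∈ L` generates `L`, so `q = z + w` and some translate of `B` lies in `w`;
  -- compactness of `L` leaves finitely many translates.
  have hcover : L ⊆ ⋃ a : S, {w : Ultrafilter S | (a + ·) ⁻¹' B ∈ w} := fun w hw => by
    obtain ⟨z, rfl⟩ :=
      (range_add_eq_of_minimal hL hw (Ultrafilter.continuous_add_left w)).symm ▸ hqL
    exact Set.mem_iUnion.2 (Ultrafilter.nonempty_of_mem hB)
  obtain ⟨T, hT⟩ := hL.prop.2.1.isCompact.elim_finite_subcover _
    (fun a => ultrafilter_isOpen_basic _) hcover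
  have hshift : ∀ y : S, ∃ a ∈ T, (fun b => a + (y + b)) ⁻¹' B ∈ q := fun y => by
    obtain ⟨a, haT, ha⟩ := Set.mem_iUnion₂.1 (hT (hL.prop.2.2 q hqL (pure y)))
    rw [Set.mem_ofPred_eq, Ultrafilter.mem_add_iff, Ultrafilter.mem_pure] at ha
    exact ⟨a, haT, ha⟩
  refine ⟨T, ?_, fun E _ => ?_⟩
  · obtain ⟨a, haT, -⟩ := Set.mem_iUnion₂.1 (hT hqL)
    exact ⟨a, haT⟩
  have hE : ⋂ y ∈ E, {b | ∃ a ∈ T, a + (y + b) ∈ B} ∈ q :=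
    (biInter_finset_mem E).2 fun y _ => by
      obtain ⟨a, haT, ha⟩ := hshift y
      exact mem_of_superset ha fun b hb => ⟨a, haT, hb⟩
  obtain ⟨x, hx⟩ := Ultrafilter.nonempty_of_mem hE
  exact ⟨x, Set.mem_iInter₂.1 hx⟩

theorem CentralAdd.exists_idempotent_ultrafilter [Nonempty S] {A : Set S}
    (hA : CentralAdd A) :
    ∃ q : Ultrafilter S, q + q = q ∧ A ∈ q ∧ ∀ B ∈ q, PiecewiseSyndeticAdd B := by
  obtain ⟨I, C, ⟨N⟩, hCA, -, hshift, hPS⟩ := hA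
  obtain ⟨L, hL, p, hpL, hp⟩ := hPS.exists_minimal_mem
  have hshift' : ∀ B ∈ {B | ∃ N, B = C N}, ∀ y ∈ B,
      ∃ B' ∈ {B | ∃ N, B = C N}, B' ⊆ (y + ·) ⁻¹' B := by
    rintro _ ⟨N, rfl⟩ y hy
    obtain ⟨M, hM⟩ := hshift N y hy
    exact ⟨C M, ⟨M, rfl⟩, hM⟩
  obtain ⟨q, hqL, hqq, hq⟩ := hL.prop.exists_idempotent_forall_mem hshift' hpL hp
  exact ⟨q, hqq, mem_of_superset (hq _ ⟨N, rfl⟩) (hCA N),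
    fun B hB => piecewiseSyndeticAdd_of_mem_minimal hL hqL hB⟩

lemma Ultrafilter.exists_subset_forall_preimage_add_mem {q : Ultrafilter S}
    (hq : q + q = q) {B : Set S} (hB : B ∈ q) :
    ∃ B' ∈ q, B' ⊆ B ∧ ∀ x ∈ B', (x + ·) ⁻¹' B' ∈ q := by
  have hidem : ∀ {C : Set S}, C ∈ q → {m | (m + ·) ⁻¹' C ∈ q} ∈ q := fun hC => by
    rwa [← Ultrafilter.mem_add_iff, hq]
  refine ⟨B ∩ {m | (m + ·) ⁻¹' B ∈ q}, inter_mem hB (hidem hB), Set.inter_subset_left, ?_⟩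
  rintro x ⟨-, hx⟩
  refine inter_mem hx (mem_of_superset (hidem hx) fun m hm => ?_)
  have hm : (fun b => x + (m + b)) ⁻¹' B ∈ q := hm
  simp only [← add_assoc] at hm
  exact hm

end AddSemigroup

section AddCommMonoid

variable [AddCommMonoid S] {ι : Type*} [Finite ι]

lemma Combinatorics.Line.sum_apply {α J M : Type*} [Fintype J] [AddCommMonoid M]
    (l : Combinatorics.Line α J) (g : J → α → M) (x : α) :
    ∑ j, g j (l x j) = ∑ j with l.idxFun j = none, g j x + ∑ j, (l.idxFun j).elim 0 (g j) := by
  rw [sum_filter, ← sum_add_distrib]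
  refine sum_congr rfl fun j _ => ?_
  cases h : l.idxFun j <;> simp [h]

theorem PiecewiseSyndeticAdd.exists_add_sum_mem {B : Set S}
    (hB : PiecewiseSyndeticAdd B) (f : ι → ℕ → S) (c : ℕ) :
    ∃ (a : S) (H : Finset ℕ), H.Nonempty ∧ (∀ t ∈ H, c < t) ∧ ∀ i, a + ∑ t ∈ H, f i t ∈ B := by
  classical
  have := Fintype.ofFinite ι
  obtain ⟨T, -, hT⟩ := hB
  obtain ⟨J, _, hHJ⟩ := Combinatorics.Line.exists_mono_in_high_dimension ι T
  let pos : J → ℕ := fun j => c + 1 + Fintype.equivFin J j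
  have hpos : pos.Injective := fun j j' h =>
    (Fintype.equivFin J).injective (Fin.ext (by simpa [pos] using h))
  let g : (J → ι) → S := fun w => ∑ j, f (w j) (pos j)
  -- `insert 0` only because thickness is stated for nonempty sets.
  obtain ⟨x, hx⟩ := hT (insert 0 (univ.image g)) (insert_nonempty _ _)
  -- Colour `w` by some `t ∈ T` with `t + (g w + x) ∈ B`. On a monochromatic line the active
  -- coordinates give `H`, the constant ones are absorbed into `a`.
  choose col hcolT hcol using fun w =>
    hx (g w) (mem_insert_of_mem (mem_image_of_mem g (mem_univ w)))
  obtain ⟨l, ⟨t, _⟩, hl⟩ := hHJ fun w => (⟨col w, hcolT w⟩ : T)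
  refine ⟨t + x + ∑ j, (l.idxFun j).elim 0 (fun i => f i (pos j)),
    (univ.filter (l.idxFun · = none)).image pos, ?_, ?_, fun i => ?_⟩
  · obtain ⟨j, hj⟩ := l.proper
    exact ⟨pos j, mem_image_of_mem pos (mem_filter.2 ⟨mem_univ j, hj⟩)⟩
  · intro u hu
    obtain ⟨j, -, rfl⟩ := mem_image.1 hu
    exact Nat.lt_of_succ_le (Nat.le_add_right _ _)
  · have := hcol (l i)
    rw [show col (l i) = t from congrArg Subtype.val (hl i)] at this
    rw [sum_image hpos.injOn]
    convert this using 1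
    simp only [g, Combinatorics.Line.sum_apply l (fun j i => f i (pos j))]
    abel

lemma sum_mem_of_antitone {B : ℕ → Set S} (hB : Antitone B) {x : ℕ → S}
    (hx : ∀ n, x n ∈ B n) (hxB : ∀ n, ∀ b ∈ B (n + 1), x n + b ∈ B n) {F : Finset ℕ}
    (hF : F.Nonempty) {m : ℕ} (hm : ∀ n ∈ F, m ≤ n) : ∑ n ∈ F, x n ∈ B m := by
  induction F using Finset.induction_on_min generalizing m with
  | empty => exact absurd hF Finset.not_nonempty_empty
  | insert n s hlt ih =>
    rw [sum_insert fun h => lt_irrefl n (hlt n h)]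
    refine hB (hm n (mem_insert_self n s)) ?_
    obtain rfl | hs := s.eq_empty_or_nonempty
    · simpa using hx n
    · exact hxB n _ (ih hs fun k hk => hlt k hk)

variable {q : Ultrafilter S}

lemma Ultrafilter.exists_add_sum_mem_of_forall_piecewiseSyndeticAdd (hq : q + q = q)
    (hPS : ∀ B ∈ q, PiecewiseSyndeticAdd B) (f : ι → ℕ → S) {B : Set S} (hB : B ∈ q) (c : ℕ) :
    ∃ (a : S) (H : Finset ℕ) (B' : Set S), H.Nonempty ∧ (∀ t ∈ H, c < t) ∧ B' ∈ q ∧ B' ⊆ B ∧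
      ∀ i, a + ∑ t ∈ H, f i t ∈ B ∧ ∀ b ∈ B', a + ∑ t ∈ H, f i t + b ∈ B := by
  obtain ⟨B₀, hB₀q, hB₀B, hB₀⟩ := Ultrafilter.exists_subset_forall_preimage_add_mem hq hB
  obtain ⟨a, H, hH, hHc, hx⟩ := (hPS B₀ hB₀q).exists_add_sum_mem f c
  refine ⟨a, H, B₀ ∩ ⋂ i, (a + ∑ t ∈ H, f i t + ·) ⁻¹' B₀, hH, hHc,
    inter_mem hB₀q (iInter_mem.2 fun i => hB₀ _ (hx i)),
    Set.inter_subset_left.trans hB₀B, fun i => ⟨hB₀B (hx i), fun b hb => hB₀B ?_⟩⟩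
  exact Set.mem_iInter.1 hb.2 i

theorem Ultrafilter.exists_sum_add_sum_mem (hq : q + q = q)
    (hPS : ∀ B ∈ q, PiecewiseSyndeticAdd B) {A : Set S} (hA : A ∈ q) (f : ι → ℕ → S) :
    ∃ (a : ℕ → S) (H : ℕ → Finset ℕ), (∀ n, (H n).Nonempty) ∧
      (∀ n, ∀ s ∈ H n, ∀ u ∈ H (n + 1), s < u) ∧
      ∀ i (F : Finset ℕ), F.Nonempty → ∑ n ∈ F, (a n + ∑ t ∈ H n, f i t) ∈ A := by
  choose a H B' hH hHc hB'q hB'B hx using fun (B : {B // B ∈ q}) (c : ℕ) =>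
    exists_add_sum_mem_of_forall_piecewiseSyndeticAdd hq hPS f B.2 c
  -- `state n` is the set `B n ∈ q` in which `(a n, H n)` is chosen, with a bound below `H n`.
  let state : ℕ → {B // B ∈ q} × ℕ := fun n =>
    Nat.rec (⟨A, hA⟩, 0) (fun _ s => (⟨B' s.1 s.2, hB'q s.1 s.2⟩, (H s.1 s.2).sup id)) n
  refine ⟨fun n => a (state n).1 (state n).2, fun n => H (state n).1 (state n).2,
    fun n => hH _ _, fun n s hs u hu => (le_sup (f := id) hs).trans_lt (hHc _ _ u hu),
    fun i F hF => ?_⟩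
  have hanti : Antitone fun n => ((state n).1 : Set S) :=
    antitone_nat_of_succ_le fun n => hB'B _ _
  exact sum_mem_of_antitone hanti (fun n => (hx _ _ i).1) (fun n => (hx _ _ i).2) hF
    fun n _ => Nat.zero_le n

end AddCommMonoid

end Ultrafilter

lemma exists_natCast_eq_add {ι : Type*} [Fintype ι] (y : ι → ℕ → ℤ) :
    ∃ (w : ℕ → ℕ) (f : ι → ℕ → ℕ), ∀ i t, (f i t : ℤ) = y i t + w t := by
  refine ⟨fun t => ∑ i, (y i t).natAbs, fun i t => (y i t + ∑ j, (y j t).natAbs).toNat,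
    fun i t => Int.toNat_of_nonneg ?_⟩
  have : (y i t).natAbs ≤ ∑ j, (y j t).natAbs :=
    single_le_sum (f := fun j => (y j t).natAbs) (fun _ _ => Nat.zero_le _) (mem_univ i)
  omega

/-- Furstenberg's Central Sets Theorem in `(ℕ,+)` with finitely
many integer sequences; the relevant sums lie in (the image in `ℤ` of) `A`. -/
theorem furstenbergCentralSetsTheorem (A : Set ℕ) (hA : CentralAdd A)
    (k : ℕ) (y : Fin k → ℕ → ℤ) :
    ∃ (a : ℕ → ℕ) (H : ℕ → Finset ℕ),
      (∀ n : ℕ, (H n).Nonempty) ∧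
      (∀ n : ℕ, ∀ s ∈ H n, ∀ u ∈ H (n + 1), s < u) ∧
      ∀ (i : Fin k) (F : Finset ℕ), F.Nonempty →
        (∑ n ∈ F, ((a n : ℤ) + ∑ t ∈ H n, y i t)) ∈
          ((fun q : ℕ => (q : ℤ)) '' A) := by
  obtain ⟨q, hq, hAq, hPS⟩ := hA.exists_idempotent_ultrafilter
  obtain ⟨w, f, hf⟩ := exists_natCast_eq_add y
  obtain ⟨a, H, hH, hHH, hsum⟩ := Ultrafilter.exists_sum_add_sum_mem hq hPS hAq f
  refine ⟨fun n => a n + ∑ t ∈ H n, w t, H, hH, hHH, fun i F hF => ⟨_, hsum i F hF, ?_⟩⟩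
  push_cast
  simp only [hf, sum_add_distrib]
  ring
end

section
/- Let (S,·) be a semigroup, A ⊆ S a J-set (noncommutative sense), and b ∈ S such that b⁻¹A ∩ A is a J-set. Then for every finite nonempty set F of sequences in S and n ∈ ℕ, there exist m ∈ ℕ, a ∈ S^{m+1}, t ∈ 𝒥_m with t(1) > n such that both x(m,a,t,f) ∈ A and b·x(m,a,t,f) ∈ A for all f ∈ F. -/
/-! A `J`-set witness for the shifted sequences `k ↦ f (k + n + 1)` becomes, after shifting
the indices `t` by `n + 1`, a witness for the `f` themselves with `t 0 > n`. -/

theorem xNC_shift {S : Type*} [Semigroup S] (m : ℕ) (a : ℕ → S) (t : ℕ → ℕ) (f : ℕ → S)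
    (c : ℕ) : xNC m a (fun j => t j + c) f = xNC m a t (fun k => f (k + c)) :=
  rfl

theorem JSetNC.exists_gt {S : Type*} [Semigroup S] {A : Set S} (hA : JSetNC A)
    (G : Finset (ℕ → S)) (hG : G.Nonempty) (n : ℕ) :
    ∃ (m : ℕ) (a : ℕ → S) (t : ℕ → ℕ), 1 ≤ m ∧
      (∀ i j : ℕ, i < j → j < m → t i < t j) ∧ n < t 0 ∧ ∀ f ∈ G, xNC m a t f ∈ A := by
  classical
  obtain ⟨m, a, t, hm, ht, hmem⟩ := hA (G.image fun f k => f (k + (n + 1))) (hG.image _)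
  refine ⟨m, a, fun j => t j + (n + 1), hm, fun i j hij hjm => by simpa using ht i j hij hjm,
    Nat.lt_add_left _ n.lt_succ_self, fun f hf => ?_⟩
  rw [xNC_shift]
  exact hmem _ (Finset.mem_image_of_mem _ hf)

theorem jSetNC_translate_general {S : Type*} [Semigroup S] (A : Set S)
    (b : S) (hb : JSetNC ({s : S | b * s ∈ A} ∩ A))
    (F : Finset (ℕ → S)) (hF : F.Nonempty) (n : ℕ) :
    ∃ (m : ℕ) (a : ℕ → S) (t : ℕ → ℕ), 1 ≤ m ∧
      (∀ i j : ℕ, i < j → j < m → t i < t j) ∧ n < t 0 ∧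
      ∀ f ∈ F, xNC m a t f ∈ A ∧ b * xNC m a t f ∈ A := by
  obtain ⟨m, a, t, hm, ht, hn, hmem⟩ := hb.exists_gt F hF n
  exact ⟨m, a, t, hm, ht, hn, fun f hf => (hmem f hf).symm⟩

/-- if `A` and `b⁻¹A ∩ A` are noncommutative `J`-sets, then
witnesses can be found with `t 0 > n` landing in `A` both directly and after
left multiplication by `b`. -/
theorem jSetNC_translate {S : Type*} [Semigroup S] (A : Set S) (hA : JSetNC A)
    (b : S) (hb : JSetNC ({s : S | b * s ∈ A} ∩ A))
    (F : Finset (ℕ → S)) (hF : F.Nonempty) (n : ℕ) :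
    ∃ (m : ℕ) (a : ℕ → S) (t : ℕ → ℕ), 1 ≤ m ∧
      (∀ i j : ℕ, i < j → j < m → t i < t j) ∧ n < t 0 ∧
      ∀ f ∈ F, xNC m a t f ∈ A ∧ b * xNC m a t f ∈ A :=
  jSetNC_translate_general A b hb F hF n
end
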